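/- Let E be a Hilbert space and T ∈ B(F²(Hₙ) ⊗ E) a strictly positive multi-Toeplitz operator. Define ψ : E → F²(Hₙ) ⊗ E by ψ h := T^{-1}(1 ⊗ h) and let N := (P_E T^{-1}|_E)^{1/2}. Then the associated multi-analytic operator M_ψ (defined on polynomials by M_ψ(e_ω ⊗ h) := (S_ω ⊗ I_E) ψh) extends to a bounded invertible multi-analytic operator on F²(Hₙ) ⊗ E, N is invertible, and T = (M_ψ^{-1})* (I ⊗ N²) M_ψ^{-1}; thus Θ := (I ⊗ N) M_ψ^{-1} is a square outer spectral factor of T, i.e., T = Θ*Θ with Θ multi-analytic and outer. -/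

import Mathlib

/-!
Write `ψ_w h = S_w T⁻¹(1 ⊗ h)`. The multi-Toeplitz identity `S_i* T S_j = δ_ij T`, together with
`S_i* (1 ⊗ h) = 0`, makes these vectors orthogonal for the inner product `⟪T ·, ·⟫`:
`⟪T ψ_w a, ψ_v b⟫ = δ_wv ⟪1 ⊗ a, T⁻¹(1 ⊗ b)⟫ = δ_wv ⟪N a, N b⟫`. Strict positivity of `T` turns
this into a bound `‖∑ ψ_w a_w‖² ≤ C ∑ ‖a_w‖²`, so `M_ψ` is bounded, and `M_ψ* T M_ψ = D* D`
for the multi-analytic operator `D = I ⊗ N`.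

The `ψ_w h` also span a dense subspace. If `T y ⊥ ψ_w h` for all `w, h`, then `y ⊥ 1 ⊗ E`;
on `(1 ⊗ E)^⊥ = ⊕_j ran S_j` the Toeplitz identity gives `S_i* T = T S_i*`, so `S_i* y` has the
same property as `y`, and by induction on words `y ⊥ e_w ⊗ E` for every `w`, whence `y = 0`.

Hence `M_ψ⁻¹ = D⁻¹ D⁻¹* M_ψ* T`, and conjugating `M_ψ* T M_ψ = D* D` by `M_ψ⁻¹` gives
`T = Θ* Θ` with `Θ = D M_ψ⁻¹`. As a product of multi-analytic operators `Θ` is multi-analytic,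
and it is outer because it is onto.
-/

open scoped InnerProductSpace
open ContinuousLinearMap

theorem ContinuousLinearMap.ext_of_dense_span {𝕜 κ E H G : Type*} [RCLike 𝕜]
    [NormedAddCommGroup H] [NormedSpace 𝕜 H] [TopologicalSpace G] [AddCommGroup G] [Module 𝕜 G]
    [T2Space G] {g : κ → E → H}
    (hg : (Submodule.span 𝕜 (⋃ k, Set.range (g k))).topologicalClosure = ⊤) {A B : H →L[𝕜] G}
    (h : ∀ k e, A (g k e) = B (g k e)) : A = B :=
  ext_on (Submodule.dense_iff_topologicalClosure_eq_top.2 hg) fun _ hu => by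
    obtain ⟨k, e, rfl⟩ := Set.mem_iUnion.1 hu
    exact h k e

theorem mul_eq_one_of_mul_eq_one_of_dense_span {𝕜 κ E H : Type*} [RCLike 𝕜]
    [NormedAddCommGroup H] [NormedSpace 𝕜 H] {g : κ → E → H} {A B : H →L[𝕜] H}
    (hg : (Submodule.span 𝕜 (⋃ k, Set.range fun e => A (g k e))).topologicalClosure = ⊤)
    (hBA : B * A = 1) : A * B = 1 :=
  ext_of_dense_span hg fun k e => by
    simpa using congrArg A (DFunLike.congr_fun hBA (g k e))

section DenseSpan

variable {𝕜 κ E H : Type*} [RCLike 𝕜] [NormedAddCommGroup H] [InnerProductSpace 𝕜 H]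
  [CompleteSpace H]

theorem topologicalClosure_span_iUnion_range_eq_top_iff (g : κ → E → H) :
    (Submodule.span 𝕜 (⋃ k, Set.range (g k))).topologicalClosure = ⊤ ↔
      ∀ x, (∀ k e, ⟪g k e, x⟫_𝕜 = 0) → x = 0 := by
  rw [Submodule.topologicalClosure_eq_top_iff, Submodule.eq_bot_iff]
  refine forall_congr' fun x => imp_congr_left ?_
  rw [Submodule.mem_orthogonal]
  refine ⟨fun h k e => h _ (Submodule.subset_span (Set.mem_iUnion.2 ⟨k, e, rfl⟩)), fun h u hu => ?_⟩
  rw [← inner_eq_zero_symm, ← Submodule.mem_orthogonal_singleton_iff_inner_right]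
  refine Submodule.span_le.2 ?_ hu
  simp only [Set.iUnion_subset_iff, Set.range_subset_iff, SetLike.mem_coe,
    Submodule.mem_orthogonal_singleton_iff_inner_right]
  exact fun k e => inner_eq_zero_symm.1 (h k e)

variable {g : κ → E → H}

theorem eq_of_forall_inner_eq_of_dense_span
    (hg : (Submodule.span 𝕜 (⋃ k, Set.range (g k))).topologicalClosure = ⊤) {x y : H}
    (h : ∀ k e, ⟪g k e, x⟫_𝕜 = ⟪g k e, y⟫_𝕜) : x = y :=
  sub_eq_zero.1 <| (topologicalClosure_span_iUnion_range_eq_top_iff g).1 hg _ fun k e => by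
    rw [inner_sub_right, h, sub_self]

theorem topologicalClosure_span_iUnion_range_map_eq_top
    (hg : (Submodule.span 𝕜 (⋃ k, Set.range (g k))).topologicalClosure = ⊤) {A B : H →L[𝕜] H}
    (hAB : A * B = 1) :
    (Submodule.span 𝕜 (⋃ k, Set.range fun e => A (g k e))).topologicalClosure = ⊤ := by
  refine (topologicalClosure_span_iUnion_range_eq_top_iff _).2 fun x hx => ?_
  have hAx : adjoint A x = 0 := (topologicalClosure_span_iUnion_range_eq_top_iff g).1 hg _
    fun k e => by rw [adjoint_inner_right, hx]
  have h := congrArg (fun C => adjoint C x) hAB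
  simp only [mul_def, adjoint_comp, comp_apply, hAx, map_zero, adjoint_one] at h
  exact h.symm

end DenseSpan

section GramSeries

variable {𝕜 ι E F G : Type*} [NontriviallyNormedField 𝕜] [NormedAddCommGroup E] [NormedSpace 𝕜 E]
  [NormedAddCommGroup F] [NormedSpace 𝕜 F] [CompleteSpace F] [NormedAddCommGroup G]
  [NormedSpace 𝕜 G] {f : ι → E →L[𝕜] F} {C : ℝ}

theorem summable_apply_of_gram_le (hC : 0 ≤ C)
    (hf : ∀ (s : Finset ι) (a : ι → E), ‖∑ i ∈ s, f i (a i)‖ ^ 2 ≤ C * ∑ i ∈ s, ‖a i‖ ^ 2)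
    {a : ι → E} (ha : Summable fun i => ‖a i‖ ^ 2) : Summable fun i => f i (a i) := by
  refine summable_iff_vanishing_norm.2 fun ε hε => ?_
  obtain ⟨s, hs⟩ := summable_iff_vanishing_norm.1 ha (ε ^ 2 / (C + 1)) (by positivity)
  refine ⟨s, fun t ht => lt_of_pow_lt_pow_left₀ 2 hε.le ?_⟩
  have ht' : ∑ i ∈ t, ‖a i‖ ^ 2 < ε ^ 2 / (C + 1) := by
    simpa [Real.norm_of_nonneg (Finset.sum_nonneg fun i _ => sq_nonneg ‖a i‖)] using hs t ht
  calc ‖∑ i ∈ t, f i (a i)‖ ^ 2 ≤ C * ∑ i ∈ t, ‖a i‖ ^ 2 := hf t a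
    _ ≤ C * (ε ^ 2 / (C + 1)) := by gcongr
    _ < ε ^ 2 := by
      rw [mul_div_assoc', div_lt_iff₀ (by positivity)]
      nlinarith [pow_pos hε 2]

theorem exists_hasSum_apply_of_gram_le (hC : 0 ≤ C)
    (hf : ∀ (s : Finset ι) (a : ι → E), ‖∑ i ∈ s, f i (a i)‖ ^ 2 ≤ C * ∑ i ∈ s, ‖a i‖ ^ 2)
    (K : ι → G →L[𝕜] E) {B : ℝ} (hK : ∀ (s : Finset ι) x, ∑ i ∈ s, ‖K i x‖ ^ 2 ≤ B * ‖x‖ ^ 2) :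
    ∃ L : G →L[𝕜] F, ∀ x, HasSum (fun i => f i (K i x)) (L x) := by
  have hKx (x : G) : Summable fun i => ‖K i x‖ ^ 2 :=
    summable_of_sum_le (fun i => sq_nonneg _) (hK · x)
  have hs (x : G) := summable_apply_of_gram_le hC hf (hKx x)
  have hbound (x : G) : ‖∑' i, f i (K i x)‖ ≤ √(C * B) * ‖x‖ := by
    rw [← Real.sqrt_sq (norm_nonneg x), ← Real.sqrt_mul' _ (sq_nonneg _)]
    refine Real.le_sqrt_of_sq_le (le_of_tendsto' ((hs x).hasSum.norm.pow 2) fun s => ?_)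
    calc ‖∑ i ∈ s, f i (K i x)‖ ^ 2 ≤ C * ∑ i ∈ s, ‖K i x‖ ^ 2 := hf s _
      _ ≤ C * (B * ‖x‖ ^ 2) := by gcongr; exact hK s x
      _ = C * B * ‖x‖ ^ 2 := by ring
  let L : G →ₗ[𝕜] F :=
    { toFun := fun x => ∑' i, f i (K i x)
      map_add' := fun x y => by simp only [map_add]; exact (hs x).tsum_add (hs y)
      map_smul' := fun c x => by simp only [map_smul]; exact tsum_const_smul'' c }
  exact ⟨L.mkContinuous _ hbound, fun x => (hs x).hasSum⟩

end GramSeries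

section Positivity

variable {H K : Type*} [NormedAddCommGroup H] [InnerProductSpace ℂ H] [CompleteSpace H]
  [NormedAddCommGroup K] [InnerProductSpace ℂ K] [CompleteSpace K]

theorem isStrictlyPositive_of_mul_norm_sq_le {A : H →L[ℂ] H} (hA : A.IsPositive) {r : ℝ}
    (hr : 0 < r) (h : ∀ x, r * ‖x‖ ^ 2 ≤ RCLike.re ⟪A x, x⟫_ℂ) : IsStrictlyPositive A :=
  IsUnit.isStrictlyPositive
    (A.isUnit_of_forall_le_norm_inner_map (c := ⟨r, hr.le⟩) hr fun x =>
      (mul_comm r _ ▸ h x).trans (RCLike.re_le_norm _))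
    ((nonneg_iff_isPositive A).2 hA)

theorem IsStrictlyPositive.exists_pos_mul_norm_sq_le {B : H →L[ℂ] H}
    (hB : IsStrictlyPositive B) : ∃ r > 0, ∀ x, r * ‖x‖ ^ 2 ≤ RCLike.re ⟪B x, x⟫_ℂ := by
  rcases subsingleton_or_nontrivial H with hH | hH
  · exact ⟨1, one_pos, fun x => by simp [Subsingleton.elim x 0]⟩
  obtain ⟨r, hr, hrB⟩ := (CFC.exists_pos_algebraMap_le_iff hB.isSelfAdjoint).2
    fun _ => hB.spectrum_pos
  refine ⟨r, hr, fun x => ?_⟩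
  have := ((le_def _ _).1 hrB).re_inner_nonneg_left x
  rwa [sub_apply, Algebra.algebraMap_eq_smul_one, smul_apply, one_apply_eq_self, inner_sub_left,
    map_sub, RCLike.real_smul_eq_coe_smul (K := ℂ), inner_smul_left, RCLike.conj_ofReal,
    RCLike.re_ofReal_mul, inner_self_eq_norm_sq, sub_nonneg] at this

theorem IsStrictlyPositive.adjoint_conj_of_norm_map {B : K →L[ℂ] K} (hB : IsStrictlyPositive B)
    {J : H →L[ℂ] K} (hJ : ∀ h, ‖J h‖ = ‖h‖) : IsStrictlyPositive (adjoint J ∘L B ∘L J) := by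
  obtain ⟨r, hr, hrB⟩ := hB.exists_pos_mul_norm_sq_le
  refine isStrictlyPositive_of_mul_norm_sq_le
    (((nonneg_iff_isPositive B).1 hB.nonneg).adjoint_conj J) hr fun x => ?_
  rw [comp_apply, comp_apply, adjoint_inner_left, ← hJ x]
  exact hrB (J x)

end Positivity

theorem IsStrictlyPositive.of_mul_eq_one {A : Type*} [PartialOrder A] [Ring A] [StarRing A]
    [TopologicalSpace A] [StarOrderedRing A] [Algebra ℝ A]
    [ContinuousFunctionalCalculus ℝ A IsSelfAdjoint] [NonnegSpectrumClass ℝ A] {a b : A}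
    (ha : IsStrictlyPositive a) (hab : a * b = 1) (hba : b * a = 1) : IsStrictlyPositive b := by
  simpa [Ring.inverse_unit ⟨a, b, hab, hba⟩] using ha.ringInverse

theorem IsStrictlyPositive.exists_sqrt {A : Type*} [PartialOrder A] [Ring A] [StarRing A]
    [TopologicalSpace A] [StarOrderedRing A] [Algebra ℝ A]
    [ContinuousFunctionalCalculus ℝ A IsSelfAdjoint] [NonnegSpectrumClass ℝ A]
    [IsSemitopologicalRing A] [T2Space A] {a : A} (ha : IsStrictlyPositive a) :
    ∃ b c : A, 0 ≤ b ∧ b * b = a ∧ b * c = 1 ∧ c * b = 1 :=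
  let ⟨⟨b, c, hbc, hcb⟩, (hb : b = CFC.sqrt a)⟩ := ha.isUnit_cfcSqrt
  ⟨b, c, hb ▸ CFC.sqrt_nonneg a, hb ▸ CFC.sqrt_mul_sqrt_self a ha.nonneg, hbc, hcb⟩

section StarMonoid

variable {R : Type*} [Monoid R] [StarMul R] {M T D D' : R}

theorem mul_eq_one_of_star_mul_mul_eq (h : star M * T * M = star D * D) (hDD' : D * D' = 1)
    (hD'D : D' * D = 1) : D' * star D' * star M * T * M = 1 := by
  calc D' * star D' * star M * T * M = D' * star D' * (star M * T * M) := by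
        simp only [mul_assoc]
    _ = D' * star (D * D') * D := by rw [h, star_mul]; simp only [mul_assoc]
    _ = 1 := by rw [hDD', star_one, mul_one, hD'D]

theorem eq_star_mul_self_of_star_mul_mul_eq {Minv : R} (h : star M * T * M = star D * D)
    (hM : M * Minv = 1) : T = star (D * Minv) * (D * Minv) := by
  calc T = star (M * Minv) * T * (M * Minv) := by rw [hM, star_one, one_mul, mul_one]
    _ = star Minv * (star M * T * M) * Minv := by rw [star_mul]; simp only [mul_assoc]
    _ = star (D * Minv) * (D * Minv) := by rw [h, star_mul]; simp only [mul_assoc]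

end StarMonoid

section FockModel

variable {ι E F : Type*} [NormedAddCommGroup E] [InnerProductSpace ℂ E]
  [NormedAddCommGroup F] [InnerProductSpace ℂ F] [CompleteSpace F]

def IsMultiToeplitz [DecidableEq ι] (S : ι → F →L[ℂ] F) (T : F →L[ℂ] F) : Prop :=
  ∀ i j, adjoint (S i) ∘L T ∘L S j = if i = j then T else 0

/-- `F` models `F²(Hₙ) ⊗ E`: `Sw w` is `S_w ⊗ I_E` and `J h` is `1 ⊗ h`. -/
structure IsFockModel (S : ι → F →L[ℂ] F) (Sw : List ι → F →L[ℂ] F) (J : E →L[ℂ] F) : Prop where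
  norm_S : ∀ i x, ‖S i x‖ = ‖x‖
  adjoint_S_comp_S_of_ne : ∀ i j, i ≠ j → adjoint (S i) ∘L S j = 0
  word_nil : Sw [] = 1
  word_cons : ∀ i w, Sw (i :: w) = S i ∘L Sw w
  norm_J : ∀ h, ‖J h‖ = ‖h‖
  range_J : LinearMap.range (J : E →ₗ[ℂ] F) = ⨅ i, LinearMap.ker (adjoint (S i) : F →ₗ[ℂ] F)
  dense_span : (Submodule.span ℂ (⋃ w, Set.range fun h : E => Sw w (J h))).topologicalClosure = ⊤

namespace IsFockModel

variable {S : ι → F →L[ℂ] F} {Sw : List ι → F →L[ℂ] F} {J : E →L[ℂ] F}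

theorem adjoint_S_comp_S [DecidableEq ι] (hF : IsFockModel S Sw J) (i j : ι) :
    adjoint (S i) ∘L S j = if i = j then 1 else 0 := by
  split_ifs with h
  · subst h
    exact (norm_map_iff_adjoint_comp_self _).1 (hF.norm_S i)
  · exact hF.adjoint_S_comp_S_of_ne i j h

theorem _root_.IsMultiToeplitz.adjoint_apply [DecidableEq ι] {T : F →L[ℂ] F}
    (hT : IsMultiToeplitz S T) (i j : ι) (x : F) :
    adjoint (S i) (T (S j x)) = if i = j then T x else 0 := by
  have := DFunLike.congr_fun (hT i j) x
  split_ifs at this ⊢ <;> simpa using this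

theorem isMultiToeplitz_one [DecidableEq ι] (hF : IsFockModel S Sw J) : IsMultiToeplitz S 1 :=
  fun i j => hF.adjoint_S_comp_S i j

theorem adjoint_S_S_apply [DecidableEq ι] (hF : IsFockModel S Sw J) (i j : ι) (x : F) :
    adjoint (S i) (S j x) = if i = j then x else 0 := by
  simpa using hF.isMultiToeplitz_one.adjoint_apply i j x

theorem adjoint_J_J [CompleteSpace E] (hF : IsFockModel S Sw J) (h : E) : adjoint J (J h) = h := by
  simpa using DFunLike.congr_fun ((norm_map_iff_adjoint_comp_self J).1 hF.norm_J) h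

theorem adjoint_S_J (hF : IsFockModel S Sw J) (i : ι) (h : E) : adjoint (S i) (J h) = 0 := by
  have : J h ∈ ⨅ i, LinearMap.ker (adjoint (S i) : F →ₗ[ℂ] F) :=
    hF.range_J ▸ LinearMap.mem_range_self _ h
  exact LinearMap.mem_ker.1 ((Submodule.mem_iInf _).1 this i)

theorem adjoint_J_S [CompleteSpace E] (hF : IsFockModel S Sw J) (i : ι) (x : F) :
    adjoint J (S i x) = 0 :=
  ext_inner_left ℂ fun e => by
    rw [adjoint_inner_right, ← adjoint_inner_left, hF.adjoint_S_J, inner_zero_left,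
      inner_zero_right]

theorem inner_word_word [DecidableEq ι] (hF : IsFockModel S Sw J) {T : F →L[ℂ] F}
    (hT : IsMultiToeplitz S T) (hTsa : IsSelfAdjoint T) {p q : F}
    (hp : ∀ i, adjoint (S i) (T p) = 0) (hq : ∀ i, adjoint (S i) (T q) = 0) (w v : List ι) :
    ⟪T (Sw w p), Sw v q⟫_ℂ = if w = v then ⟪T p, q⟫_ℂ else 0 := by
  induction w generalizing v with
  | nil =>
    cases v with
    | nil => simp [hF.word_nil]
    | cons j v =>
      rw [hF.word_nil, hF.word_cons, comp_apply, ← adjoint_inner_left]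
      simp [hp]
  | cons i w ih =>
    cases v with
    | nil =>
      rw [hF.word_nil, hF.word_cons, comp_apply, ← hTsa.adjoint_eq, adjoint_inner_left,
        ← adjoint_inner_right, hTsa.adjoint_eq]
      simp [hq]
    | cons j v =>
      rw [hF.word_cons, hF.word_cons, comp_apply, comp_apply, ← adjoint_inner_left]
      rw [hT.adjoint_apply]
      by_cases hij : j = i
      · subst hij
        simp [ih]
      · simp [hij, Ne.symm hij]

theorem inner_word_J [DecidableEq ι] [CompleteSpace E] (hF : IsFockModel S Sw J)
    (w v : List ι) (a b : E) :
    ⟪Sw w (J a), Sw v (J b)⟫_ℂ = if w = v then ⟪a, b⟫_ℂ else 0 := by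
  have := hF.inner_word_word hF.isMultiToeplitz_one (IsSelfAdjoint.one _) (p := J a) (q := J b)
    (by simpa using hF.adjoint_S_J · a) (by simpa using hF.adjoint_S_J · b) w v
  simp only [one_apply_eq_self] at this
  rwa [← adjoint_inner_right J, hF.adjoint_J_J] at this

theorem adjoint_J_adjoint_word_word_J [DecidableEq ι] [CompleteSpace E]
    (hF : IsFockModel S Sw J) (w v : List ι) (h : E) :
    adjoint J (adjoint (Sw w) (Sw v (J h))) = if w = v then h else 0 :=
  ext_inner_left ℂ fun e => by
    rw [adjoint_inner_right, adjoint_inner_right, hF.inner_word_J]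
    split_ifs <;> simp

theorem inner_sum_word [DecidableEq ι] (hF : IsFockModel S Sw J) {T : F →L[ℂ] F}
    (hT : IsMultiToeplitz S T) (hTsa : IsSelfAdjoint T) (s : Finset (List ι)) (p : List ι → F)
    (hp : ∀ w i, adjoint (S i) (T (p w)) = 0) :
    ⟪T (∑ w ∈ s, Sw w (p w)), ∑ w ∈ s, Sw w (p w)⟫_ℂ = ∑ w ∈ s, ⟪T (p w), p w⟫_ℂ := by
  simp only [map_sum, sum_inner, inner_sum, hF.inner_word_word hT hTsa (hp _) (hp _)]
  exact Finset.sum_congr rfl fun w hw => by rw [Finset.sum_ite_eq', if_pos hw]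

theorem norm_sum_word_J_sq [DecidableEq ι] (hF : IsFockModel S Sw J) (s : Finset (List ι))
    (a : List ι → E) :
    ‖∑ w ∈ s, Sw w (J (a w))‖ ^ 2 = ∑ w ∈ s, ‖a w‖ ^ 2 := by
  have := hF.inner_sum_word hF.isMultiToeplitz_one (IsSelfAdjoint.one _) s (fun w => J (a w))
    fun w i => by simpa using hF.adjoint_S_J i (a w)
  simp only [one_apply_eq_self] at this
  rw [← inner_self_eq_norm_sq (𝕜 := ℂ), this, map_sum]
  simp only [inner_self_eq_norm_sq, hF.norm_J]

theorem sum_norm_sq_adjoint_J_adjoint_word_le [DecidableEq ι] [CompleteSpace E]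
    (hF : IsFockModel S Sw J) (s : Finset (List ι)) (x : F) :
    ∑ w ∈ s, ‖adjoint J (adjoint (Sw w) x)‖ ^ 2 ≤ ‖x‖ ^ 2 := by
  set a := fun w => adjoint J (adjoint (Sw w) x)
  have hxy : RCLike.re ⟪x, ∑ w ∈ s, Sw w (J (a w))⟫_ℂ = ∑ w ∈ s, ‖a w‖ ^ 2 := by
    rw [inner_sum, map_sum]
    refine Finset.sum_congr rfl fun w _ => ?_
    rw [← adjoint_inner_left, ← adjoint_inner_left, inner_self_eq_norm_sq]
  have := norm_sub_sq (𝕜 := ℂ) x (∑ w ∈ s, Sw w (J (a w)))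
  rw [hxy, hF.norm_sum_word_J_sq] at this
  nlinarith [sq_nonneg ‖x - ∑ w ∈ s, Sw w (J (a w))‖]

theorem exists_map_word [DecidableEq ι] [CompleteSpace E] (hF : IsFockModel S Sw J)
    (X : E →L[ℂ] F) {C : ℝ} (hC : 0 ≤ C)
    (hX : ∀ (s : Finset (List ι)) (a : List ι → E),
      ‖∑ w ∈ s, Sw w (X (a w))‖ ^ 2 ≤ C * ∑ w ∈ s, ‖a w‖ ^ 2) :
    ∃ M : F →L[ℂ] F, ∀ w h, M (Sw w (J h)) = Sw w (X h) := by
  -- `J* S_w*` reads off the `e_w ⊗ E` component, so `M x = ∑_w S_w X (J* S_w* x)`.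
  obtain ⟨M, hM⟩ := exists_hasSum_apply_of_gram_le (f := fun w => Sw w ∘L X) hC hX
    (fun w => adjoint J ∘L adjoint (Sw w)) (B := 1)
    fun s x => by simpa using hF.sum_norm_sq_adjoint_J_adjoint_word_le s x
  refine ⟨M, fun v h => (hM _).unique ?_⟩
  convert hasSum_ite_eq v (Sw v (X h)) using 1
  funext w
  simp only [comp_apply, hF.adjoint_J_adjoint_word_word_J]
  split_ifs with hwv
  · rw [hwv]
  · rw [map_zero, map_zero]

theorem commute_of_map_word (hF : IsFockModel S Sw J) {M : F →L[ℂ] F} {X : E → F}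
    (hM : ∀ w h, M (Sw w (J h)) = Sw w (X h)) (i : ι) : Commute M (S i) :=
  ext_of_dense_span hF.dense_span fun w h => by
    show M (S i (Sw w (J h))) = S i (M (Sw w (J h)))
    rw [← comp_apply (S i), ← hF.word_cons, hM, hM, hF.word_cons, comp_apply]

theorem commute_word (hF : IsFockModel S Sw J) {M : F →L[ℂ] F} (hM : ∀ i, Commute M (S i))
    (w : List ι) : Commute M (Sw w) := by
  induction w with
  | nil => rw [hF.word_nil]; exact Commute.one_right M
  | cons i w ih => rw [hF.word_cons]; exact (hM i).mul_right ih

theorem eq_sum_S_adjoint_S [DecidableEq ι] [Fintype ι] [CompleteSpace E]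
    (hF : IsFockModel S Sw J) {y : F} (hy : adjoint J y = 0) :
    y = ∑ j, S j (adjoint (S j) y) := by
  set z := y - ∑ j, S j (adjoint (S j) y)
  have hSz (i : ι) : adjoint (S i) z = 0 := by
    simp [z, hF.adjoint_S_S_apply]
  have hJz : adjoint J z = 0 := by simp [z, hy, hF.adjoint_J_S]
  obtain ⟨h, hh : J h = z⟩ : z ∈ LinearMap.range (J : E →ₗ[ℂ] F) := by
    rw [hF.range_J]
    simpa [Submodule.mem_iInf] using hSz
  rw [← hh, hF.adjoint_J_J] at hJz
  exact sub_eq_zero.1 (hh.symm.trans (by rw [hJz, map_zero]))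

theorem _root_.IsMultiToeplitz.adjoint_S_apply_of_adjoint_J [DecidableEq ι] [Fintype ι]
    [CompleteSpace E] (hF : IsFockModel S Sw J) {T : F →L[ℂ] F} (hT : IsMultiToeplitz S T)
    {y : F} (hy : adjoint J y = 0) (i : ι) : adjoint (S i) (T y) = T (adjoint (S i) y) := by
  conv_lhs => rw [hF.eq_sum_S_adjoint_S hy]
  simp [hT.adjoint_apply]

theorem dense_span_word_inverse [DecidableEq ι] [Fintype ι] [CompleteSpace E]
    (hF : IsFockModel S Sw J) {T Tinv : F →L[ℂ] F} (hT : IsMultiToeplitz S T)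
    (hTsa : IsSelfAdjoint T) (hTTinv : ∀ x, T (Tinv x) = x) :
    (Submodule.span ℂ (⋃ w, Set.range fun h : E => Sw w (Tinv (J h)))).topologicalClosure = ⊤ := by
  have base (y : F) (hy : ∀ v h, ⟪Sw v (Tinv (J h)), T y⟫_ℂ = 0) (h : E) : ⟪J h, y⟫_ℂ = 0 := by
    have := hy [] h
    simp only [hF.word_nil, one_apply_eq_self] at this
    rwa [← hTsa.adjoint_eq, adjoint_inner_right, hTTinv] at this
  have key (w : List ι) : ∀ y, (∀ v h, ⟪Sw v (Tinv (J h)), T y⟫_ℂ = 0) →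
      ∀ h, ⟪Sw w (J h), y⟫_ℂ = 0 := by
    induction w with
    | nil => simpa [hF.word_nil] using base
    | cons i w ih =>
      intro y hy h
      have hJy : adjoint J y = 0 :=
        ext_inner_left ℂ fun e => by rw [adjoint_inner_right, base y hy, inner_zero_right]
      rw [hF.word_cons, comp_apply, ← adjoint_inner_right]
      refine ih _ (fun v e => ?_) h
      rw [← hT.adjoint_S_apply_of_adjoint_J hF hJy, adjoint_inner_right, ← comp_apply (S i),
        ← hF.word_cons]
      exact hy (i :: v) e
  refine (topologicalClosure_span_iUnion_range_eq_top_iff _).2 fun x hx => ?_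
  have hx0 : Tinv x = 0 := (topologicalClosure_span_iUnion_range_eq_top_iff _).1 hF.dense_span _
    fun w => key w _ fun v h => by rw [hTTinv]; exact hx v h
  rw [← hTTinv x, hx0, map_zero]

theorem exists_map_word_inverse [DecidableEq ι] [CompleteSpace E] (hF : IsFockModel S Sw J)
    {T Tinv : F →L[ℂ] F} (hT : IsMultiToeplitz S T) (hTsa : IsSelfAdjoint T) {c : ℝ}
    (hc : 0 < c) (hTc : ∀ x, c * ‖x‖ ^ 2 ≤ RCLike.re ⟪T x, x⟫_ℂ)
    (hTTinv : ∀ x, T (Tinv x) = x) :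
    ∃ M : F →L[ℂ] F, ∀ w h, M (Sw w (J h)) = Sw w (Tinv (J h)) := by
  refine hF.exists_map_word (Tinv ∘L J) (C := ‖Tinv‖ / c) (by positivity) fun s a => ?_
  have hp (w : List ι) (i : ι) : adjoint (S i) (T ((Tinv ∘L J) (a w))) = 0 := by
    simp [hTTinv, hF.adjoint_S_J]
  have hsum := hTc (∑ w ∈ s, Sw w ((Tinv ∘L J) (a w)))
  rw [hF.inner_sum_word hT hTsa s _ hp, map_sum] at hsum
  have hterm (w : List ι) :
      RCLike.re ⟪T ((Tinv ∘L J) (a w)), (Tinv ∘L J) (a w)⟫_ℂ ≤ ‖Tinv‖ * ‖a w‖ ^ 2 := by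
    rw [comp_apply, hTTinv]
    calc RCLike.re ⟪J (a w), Tinv (J (a w))⟫_ℂ ≤ ‖J (a w)‖ * ‖Tinv (J (a w))‖ :=
          (RCLike.re_le_norm _).trans (norm_inner_le_norm _ _)
      _ ≤ ‖J (a w)‖ * (‖Tinv‖ * ‖J (a w)‖) := by gcongr; exact Tinv.le_opNorm _
      _ = ‖Tinv‖ * ‖a w‖ ^ 2 := by rw [hF.norm_J]; ring
  rw [div_mul_eq_mul_div, le_div_iff₀ hc, mul_comm, Finset.mul_sum]
  exact hsum.trans (Finset.sum_le_sum fun w _ => hterm w)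

theorem exists_map_word_J_comp [DecidableEq ι] [CompleteSpace E] (hF : IsFockModel S Sw J)
    (X : E →L[ℂ] E) : ∃ D : F →L[ℂ] F, ∀ w h, D (Sw w (J h)) = Sw w (J (X h)) :=
  hF.exists_map_word (J ∘L X) (C := ‖X‖ ^ 2) (by positivity) fun s a => by
    simp only [comp_apply]
    rw [hF.norm_sum_word_J_sq, Finset.mul_sum]
    exact Finset.sum_le_sum fun w _ => by rw [← mul_pow]; gcongr; exact X.le_opNorm _

theorem exists_map_word_J_comp_of_mul_eq_one [DecidableEq ι] [CompleteSpace E]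
    (hF : IsFockModel S Sw J) {X Y : E →L[ℂ] E} (hXY : X * Y = 1) (hYX : Y * X = 1) :
    ∃ D D' : F →L[ℂ] F, (∀ w h, D (Sw w (J h)) = Sw w (J (X h))) ∧ D * D' = 1 ∧ D' * D = 1 := by
  obtain ⟨D, hD⟩ := hF.exists_map_word_J_comp X
  obtain ⟨D', hD'⟩ := hF.exists_map_word_J_comp Y
  refine ⟨D, D', hD, ext_of_dense_span hF.dense_span fun w h => ?_,
    ext_of_dense_span hF.dense_span fun w h => ?_⟩
  · simpa [hD, hD'] using congrArg (Sw w ∘ J) (DFunLike.congr_fun hXY h)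
  · simpa [hD, hD'] using congrArg (Sw w ∘ J) (DFunLike.congr_fun hYX h)

theorem star_mul_mul_eq_star_mul_self [DecidableEq ι] [CompleteSpace E]
    (hF : IsFockModel S Sw J) {T Tinv : F →L[ℂ] F} (hT : IsMultiToeplitz S T)
    (hTsa : IsSelfAdjoint T) (hTTinv : ∀ x, T (Tinv x) = x) {M D : F →L[ℂ] F} {N : E →L[ℂ] E}
    (hM : ∀ w h, M (Sw w (J h)) = Sw w (Tinv (J h)))
    (hD : ∀ w h, D (Sw w (J h)) = Sw w (J (N h))) (hN : adjoint N ∘L N = adjoint J ∘L Tinv ∘L J) :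
    star M * T * M = star D * D := by
  refine ext_of_dense_span hF.dense_span fun w a =>
    eq_of_forall_inner_eq_of_dense_span hF.dense_span fun v b => ?_
  have hp (h : E) (i : ι) : adjoint (S i) (T (Tinv (J h))) = 0 := by
    rw [hTTinv, hF.adjoint_S_J]
  show ⟪Sw v (J b), adjoint M (T (M (Sw w (J a))))⟫_ℂ = ⟪Sw v (J b), adjoint D (D (Sw w (J a)))⟫_ℂ
  rw [adjoint_inner_right, adjoint_inner_right, hM, hM, hD, hD, ← hTsa.adjoint_eq,
    adjoint_inner_right, hF.inner_word_word hT hTsa (hp b) (hp a), hF.inner_word_J,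
    hTTinv, ← adjoint_inner_right J, ← comp_apply Tinv, ← comp_apply (adjoint J), ← hN,
    comp_apply, adjoint_inner_right]

theorem dense_span_word_map (hF : IsFockModel S Sw J) {Θ R : F →L[ℂ] F}
    (hΘ : ∀ i, Commute Θ (S i)) (hΘR : Θ * R = 1) :
    (Submodule.span ℂ (⋃ w, Set.range fun h : E => Sw w (Θ (J h)))).topologicalClosure = ⊤ := by
  have hcomm (w : List ι) (x : F) : Sw w (Θ x) = Θ (Sw w x) :=
    (DFunLike.congr_fun (hF.commute_word hΘ w).eq x).symm
  simp_rw [hcomm]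
  exact topologicalClosure_span_iUnion_range_map_eq_top hF.dense_span hΘR

end IsFockModel

end FockModel

/-- In the Fock model `F ≅ F²(Hₙ) ⊗ E` (creation operators `S_i`, word
operators `Sw`, isometric embedding `J : E → F` onto `⋂ ker S_i*` with spanning translates),
let `T` be a strictly positive multi-Toeplitz operator with inverse `Tinv`, and
`ψ h := T⁻¹(1 ⊗ h)`.  Then the multi-analytic operator `M_ψ` (determined by
`M_ψ(e_w ⊗ h) = S_w ψ h`) is bounded and invertible, `N := (P_E T⁻¹|_E)^{1/2}` is
invertible, and `T = (M_ψ⁻¹)* (I ⊗ N²) (M_ψ⁻¹)`; thus `Θ := (I ⊗ N) M_ψ⁻¹` is a square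
outer spectral factor of `T`: `T = Θ*Θ` with `Θ` multi-analytic and outer. -/
theorem stmt_9 {F E : Type*}
    [NormedAddCommGroup F] [InnerProductSpace ℂ F] [CompleteSpace F]
    [NormedAddCommGroup E] [InnerProductSpace ℂ E] [CompleteSpace E]
    {n : ℕ} (S : Fin n → F →L[ℂ] F)
    (hSiso : ∀ i (x : F), ‖S i x‖ = ‖x‖)
    (hSorth : ∀ i j, i ≠ j → ContinuousLinearMap.adjoint (S i) ∘L S j = 0)
    (Sw : List (Fin n) → F →L[ℂ] F) (hSw_nil : Sw [] = 1)
    (hSw_cons : ∀ i w, Sw (i :: w) = S i ∘L Sw w)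
    (J : E →L[ℂ] F) (hJiso : ∀ h, ‖J h‖ = ‖h‖)
    (hJwand : LinearMap.range (J : E →ₗ[ℂ] F)
        = ⨅ i, LinearMap.ker (ContinuousLinearMap.adjoint (S i) : F →ₗ[ℂ] F))
    (hJspan : (Submodule.span ℂ
        (⋃ w : List (Fin n), Set.range fun h : E => Sw w (J h))).topologicalClosure = ⊤)
    (T Tinv : F →L[ℂ] F) (hTpos : T.IsPositive)
    (hTstrict : ∃ c : ℝ, 0 < c ∧ ∀ x : F, c * ‖x‖ ^ 2 ≤ (⟪T x, x⟫_ℂ).re)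
    (hTinv₁ : T ∘L Tinv = 1) (hTinv₂ : Tinv ∘L T = 1)
    (hT : ∀ i j, ContinuousLinearMap.adjoint (S i) ∘L T ∘L S j
        = if i = j then T else 0) :
    ∃ (Mψ Minv D : F →L[ℂ] F) (N Ninv : E →L[ℂ] E),
      (∀ i, Mψ ∘L S i = S i ∘L Mψ) ∧
      (∀ (w : List (Fin n)) (h : E), Mψ (Sw w (J h)) = Sw w (Tinv (J h))) ∧
      Mψ ∘L Minv = 1 ∧ Minv ∘L Mψ = 1 ∧
      N.IsPositive ∧
      (N ∘L N : E →L[ℂ] E) = ContinuousLinearMap.adjoint J ∘L Tinv ∘L J ∧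
      N ∘L Ninv = 1 ∧ Ninv ∘L N = 1 ∧
      (∀ i, D ∘L S i = S i ∘L D) ∧
      (∀ (w : List (Fin n)) (h : E), D (Sw w (J h)) = Sw w (J (N h))) ∧
      T = ContinuousLinearMap.adjoint (D ∘L Minv) ∘L (D ∘L Minv) ∧
      (Submodule.span ℂ (⋃ w : List (Fin n),
          Set.range fun h : E => Sw w (D (Minv (J h))))).topologicalClosure = ⊤ := by
  have hF : IsFockModel S Sw J := ⟨hSiso, hSorth, hSw_nil, hSw_cons, hJiso, hJwand, hJspan⟩
  obtain ⟨c, hc, hTc⟩ := hTstrict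
  have hTsa : IsSelfAdjoint T := hTpos.isSelfAdjoint
  have hTTinv (x : F) : T (Tinv x) = x := by simpa using DFunLike.congr_fun hTinv₁ x
  have hTinvpos : IsStrictlyPositive Tinv :=
    (IsUnit.isStrictlyPositive ⟨⟨T, Tinv, hTinv₁, hTinv₂⟩, rfl⟩
      ((nonneg_iff_isPositive T).2 hTpos)).of_mul_eq_one hTinv₁ hTinv₂
  obtain ⟨N, Ninv, hN0, hNN, hNNinv, hNinvN⟩ :=
    (hTinvpos.adjoint_conj_of_norm_map hJiso).exists_sqrt
  obtain ⟨M, hM⟩ := hF.exists_map_word_inverse hT hTsa hc hTc hTTinv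
  obtain ⟨D, D', hD, hDD', hD'D⟩ := hF.exists_map_word_J_comp_of_mul_eq_one hNNinv hNinvN
  have hgram : star M * T * M = star D * D := hF.star_mul_mul_eq_star_mul_self hT hTsa hTTinv hM hD
    (by rw [(IsSelfAdjoint.of_nonneg hN0).adjoint_eq]; exact hNN)
  let Minv := D' * star D' * star M * T
  have hMinvM : Minv * M = 1 := mul_eq_one_of_star_mul_mul_eq hgram hDD' hD'D
  have hMMinv : M * Minv = 1 := mul_eq_one_of_mul_eq_one_of_dense_span
    (by simpa only [← hM] using hF.dense_span_word_inverse hT hTsa hTTinv) hMinvM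
  have hΘcomm (i : Fin n) : Commute (D * Minv) (S i) := (hF.commute_of_map_word hD i).mul_left
    (Commute.units_inv_left (u := ⟨M, Minv, hMMinv, hMinvM⟩) (hF.commute_of_map_word hM i))
  have hfact : T = adjoint (D ∘L Minv) ∘L (D ∘L Minv) := by
    rw [← star_eq_adjoint]
    exact eq_star_mul_self_of_star_mul_mul_eq hgram hMMinv
  have houter := hF.dense_span_word_map hΘcomm (R := M * D') (by
    rw [mul_assoc, ← mul_assoc Minv, hMinvM, one_mul, hDD'])
  exact ⟨M, Minv, D, N, Ninv, hF.commute_of_map_word hM, hM, hMMinv, hMinvM,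
    (nonneg_iff_isPositive N).1 hN0, hNN, hNNinv, hNinvN, hF.commute_of_map_word hD, hD, hfact,
    houter⟩
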